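/- Let F be a field, t ∈ F, 2 ≤ k ≤ N, and let T_{k−1} be the Hecke operator T_{k−1} f = t·f + ((t x_{k−1} − x_k)/(x_{k−1} − x_k))·(K_{k−1,k} f − f) acting on polynomials in x_1,...,x_N. If f is a polynomial with f|_{x_k = 0} = 0, then (T_{k−1} f)|_{x_k = 0} = t · (K_{k−1,k} f)|_{x_k = 0}. -/
import Mathlib


open MvPolynomial

set_option maxHeartbeats 1000000
set_option synthInstance.maxHeartbeats 100000

/-- Let `T_{k-1}` be the Hecke operator
`T_{k-1} f = t·f + ((t x_{k-1} - x_k)/(x_{k-1} - x_k))·(K_{k-1,k} f - f)` acting on the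
field of rational functions in `x_1, ..., x_N` (here `a` plays the role of `k-1` and `b`
of `k`, and `σ` is the automorphism swapping `x_a` and `x_b`).  If `f` is a polynomial
with `f|_{x_b = 0} = 0` and `g` is a polynomial representing `T_{a} f`, then
`g|_{x_b = 0} = t · (K_{a,b} f)|_{x_b = 0}`. -/
theorem stmt_13 {K : Type*} [Field K] (N : ℕ) (hN : 2 ≤ N) (t : K)
    (a b : Fin N) (hab : (a : ℕ) + 1 = (b : ℕ))
    (σ : FractionRing (MvPolynomial (Fin N) K) ≃+* FractionRing (MvPolynomial (Fin N) K))
    (hσ : ∀ p : MvPolynomial (Fin N) K,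
      σ (algebraMap (MvPolynomial (Fin N) K) (FractionRing (MvPolynomial (Fin N) K)) p)
        = algebraMap (MvPolynomial (Fin N) K) (FractionRing (MvPolynomial (Fin N) K))
            (MvPolynomial.rename (Equiv.swap a b) p))
    (T : FractionRing (MvPolynomial (Fin N) K) → FractionRing (MvPolynomial (Fin N) K))
    (hT : ∀ f : FractionRing (MvPolynomial (Fin N) K),
      T f = algebraMap (MvPolynomial (Fin N) K) (FractionRing (MvPolynomial (Fin N) K)) (C t) * f
        + (algebraMap (MvPolynomial (Fin N) K) (FractionRing (MvPolynomial (Fin N) K))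
              (C t * X a - X b)
            / algebraMap (MvPolynomial (Fin N) K) (FractionRing (MvPolynomial (Fin N) K))
              (X a - X b))
          * (σ f - f))
    (f g : MvPolynomial (Fin N) K)
    (hf : MvPolynomial.aeval (fun l : Fin N => if l = b then (0 : MvPolynomial (Fin N) K) else X l) f = 0)
    (hg : algebraMap (MvPolynomial (Fin N) K) (FractionRing (MvPolynomial (Fin N) K)) g
        = T (algebraMap (MvPolynomial (Fin N) K) (FractionRing (MvPolynomial (Fin N) K)) f)) :
    MvPolynomial.aeval (fun l : Fin N => if l = b then (0 : MvPolynomial (Fin N) K) else X l) g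
      = C t * MvPolynomial.aeval (fun l : Fin N => if l = b then (0 : MvPolynomial (Fin N) K) else X l)
          (MvPolynomial.rename (Equiv.swap a b) f) := by

  have hane : a ≠ b := by
    intro h; rw [h] at hab; omega
  set A := algebraMap (MvPolynomial (Fin N) K) (FractionRing (MvPolynomial (Fin N) K))
  have hinj : Function.Injective A := IsFractionRing.injective _ _
  have hXne : (X a - X b : MvPolynomial (Fin N) K) ≠ 0 :=
    sub_ne_zero.mpr (fun h => hane (MvPolynomial.X_injective h))
  have hAne : A (X a) - A (X b) ≠ 0 := by
    rw [← RingHom.map_sub]; exact fun h => hXne (hinj (by simpa using h))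
  have key : g * (X a - X b)
      = C t * f * (X a - X b)
        + (C t * X a - X b) * (MvPolynomial.rename (Equiv.swap a b) f - f) := by
    apply hinj
    rw [map_mul, hg, hT, hσ]
    simp only [RingHom.map_mul, RingHom.map_sub, RingHom.map_add]
    field_simp
  set φ : MvPolynomial (Fin N) K →ₐ[K] MvPolynomial (Fin N) K :=
    MvPolynomial.aeval (fun l : Fin N => if l = b then (0 : MvPolynomial (Fin N) K) else X l)
      with hφdef
  have hφ := congrArg φ key
  have hφa : φ (X a) = X a := by simp [hφdef, if_neg hane]
  have hφb : φ (X b) = 0 := by simp [hφdef]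
  have hCt : φ (C t) = C t := by simp [hφdef]
  simp only [map_mul, map_sub, map_add] at hφ
  rw [hφa, hφb, hCt, hf] at hφ
  have h2 : φ g * X a = (C t * φ (MvPolynomial.rename (Equiv.swap a b) f)) * X a := by
    rw [sub_zero, mul_zero, zero_mul, zero_add, sub_zero, sub_zero] at hφ
    rw [hφ]; ring
  exact mul_right_cancel₀ (MvPolynomial.X_ne_zero a) h2
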